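/- arXiv:1511.02525 — 5 statements merged into one kernel-verified Lean document; each statement's English description precedes it below -/
import Mathlib

section
/- At most 5 points can be placed in the plane such that each point is within Euclidean distance 1 of a common point p, while every two of the points are at distance strictly greater than 1 from each other. Equivalently: if S is a set of points in the closed unit disk centered at p with pairwise distances > 1, then |S| ≤ 5. -/
noncomputable section

abbrev Plane := EuclideanSpace ℝ (Fin 2)

open Real Finset

/-!
Translate `p` to the origin and read the plane as `ℂ`. Among six points, two have arguments
within `π / 3` of each other on the circle, and the law of cosines shows that two points of
the unit disk seen from its centre under an angle of at most `π / 3` are at distance at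
most `1`.
-/

lemma norm_sub_le_one_of_le_two_inner {E : Type*} [NormedAddCommGroup E] [InnerProductSpace ℝ E]
    {u v : E} (hu : ‖u‖ ≤ 1) (hv : ‖v‖ ≤ 1) (h : ‖u‖ * ‖v‖ ≤ 2 * inner ℝ u v) :
    ‖u - v‖ ≤ 1 := by
  have hsq : ‖u - v‖ ^ 2 ≤ ‖u‖ ^ 2 - ‖u‖ * ‖v‖ + ‖v‖ ^ 2 := by
    rw [norm_sub_sq_real]; linarith
  -- `a² - ab + b² ≤ max a b ² ≤ 1` for `a, b ∈ [0, 1]`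
  rw [← sq_le_one_iff₀ (norm_nonneg _)]
  rcases le_total ‖u‖ ‖v‖ with huv | hvu
  · nlinarith [norm_nonneg u]
  · nlinarith [norm_nonneg v]

lemma Complex.real_inner_eq_norm_mul_norm_mul_cos_arg_sub (u v : ℂ) :
    inner ℝ u v = ‖u‖ * ‖v‖ * Real.cos (u.arg - v.arg) := by
  rw [Complex.inner, Real.cos_sub, Complex.mul_re, Complex.conj_re, Complex.conj_im,
    ← Complex.norm_mul_cos_arg u, ← Complex.norm_mul_sin_arg u,
    ← Complex.norm_mul_cos_arg v, ← Complex.norm_mul_sin_arg v]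
  ring

lemma Complex.norm_sub_le_one_of_half_le_cos_arg_sub {u v : ℂ} (hu : ‖u‖ ≤ 1) (hv : ‖v‖ ≤ 1)
    (h : 1 / 2 ≤ Real.cos (u.arg - v.arg)) : ‖u - v‖ ≤ 1 := by
  refine norm_sub_le_one_of_le_two_inner hu hv ?_
  rw [Complex.real_inner_eq_norm_mul_norm_mul_cos_arg_sub]
  nlinarith [mul_nonneg (norm_nonneg u) (norm_nonneg v)]

lemma half_le_cos_of_abs_le {t : ℝ} (h : |t| ≤ π / 3) : 1 / 2 ≤ cos t := by
  rw [← cos_abs, ← cos_pi_div_three]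
  exact cos_le_cos_of_nonneg_of_le_pi (abs_nonneg t) (by linarith [pi_pos]) h

lemma abs_sub_lt_of_floor_div_eq {a b c : ℝ} (hc : 0 < c) (h : ⌊a / c⌋ = ⌊b / c⌋) :
    |a - b| < c := by
  have := Int.abs_sub_lt_one_of_floor_eq_floor h
  rwa [← sub_div, abs_div, abs_of_pos hc, div_lt_one hc] at this

/-- Choosing `i₀` with the least angle, the other angles are sorted into the six arcs of
length `π / 3` starting at `θ i₀`; a point in the first or last arc is close to `i₀`, and
otherwise five points share four arcs. -/
lemma exists_ne_half_le_cos_sub_of_mem_Ico {ι : Type*} (S : Finset ι) (θ : ι → ℝ)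
    (hθ : ∀ i ∈ S, θ i ∈ Set.Ico 0 (2 * π)) (hS : 5 < #S) :
    ∃ i ∈ S, ∃ j ∈ S, i ≠ j ∧ 1 / 2 ≤ cos (θ i - θ j) := by
  classical
  have hpi : 0 < π / 3 := by positivity
  obtain ⟨i₀, hi₀, hmin⟩ := S.exists_min_image θ (card_pos.mp (by omega))
  set k : ι → ℤ := fun i => ⌊(θ i - θ i₀) / (π / 3)⌋
  by_cases hk : ∀ i ∈ S.erase i₀, k i ∈ Icc 1 4
  · obtain ⟨i, hi, j, hj, hij, hkij⟩ :=
      exists_ne_map_eq_of_card_lt_of_maps_to (by simp [card_erase_of_mem hi₀]; omega) hk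
    refine ⟨i, mem_of_mem_erase hi, j, mem_of_mem_erase hj, hij, half_le_cos_of_abs_le ?_⟩
    simpa only [sub_sub_sub_cancel_right] using (abs_sub_lt_of_floor_div_eq hpi hkij).le
  · push Not at hk
    obtain ⟨i, hi, hki⟩ := hk
    have hi' := mem_of_mem_erase hi
    refine ⟨i, hi', i₀, hi₀, ne_of_mem_erase hi, ?_⟩
    have h0 := hmin i hi'
    have hθi := hθ i hi'
    have hθi₀ := hθ i₀ hi₀
    simp only [Set.mem_Ico] at hθi hθi₀
    rw [mem_Icc, not_and_or, not_le, not_le] at hki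
    rcases hki with hlow | hhigh
    · have hlt : θ i - θ i₀ < π / 3 := by
        rw [← div_lt_one hpi]; exact_mod_cast Int.floor_lt.mp hlow
      exact half_le_cos_of_abs_le (abs_le.mpr ⟨by linarith, hlt.le⟩)
    · have hge : 5 * (π / 3) ≤ θ i - θ i₀ := by
        rw [← le_div_iff₀ hpi]; exact_mod_cast Int.le_floor.mp (hhigh : (5 : ℤ) ≤ k i)
      rw [← cos_sub_two_pi]
      exact half_le_cos_of_abs_le (abs_le.mpr ⟨by linarith, by linarith⟩)

lemma exists_ne_half_le_cos_sub {ι : Type*} (S : Finset ι) (θ : ι → ℝ) (hS : 5 < #S) :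
    ∃ i ∈ S, ∃ j ∈ S, i ≠ j ∧ 1 / 2 ≤ cos (θ i - θ j) := by
  obtain ⟨i, hi, j, hj, hij, h⟩ := exists_ne_half_le_cos_sub_of_mem_Ico S
    (fun i => toIcoMod two_pi_pos 0 (θ i)) (fun i _ => toIcoMod_mem_Ico' _ _) hS
  refine ⟨i, hi, j, hj, hij, ?_⟩
  have hshift : toIcoMod two_pi_pos 0 (θ i) - toIcoMod two_pi_pos 0 (θ j) = θ i - θ j -
      ((toIcoDiv two_pi_pos 0 (θ i) - toIcoDiv two_pi_pos 0 (θ j) : ℤ) : ℝ) * (2 * π) := by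
    simp only [toIcoMod, zsmul_eq_mul]; push_cast; ring
  rwa [hshift, cos_sub_int_mul_two_pi] at h

/-- At most 5 points can lie in the closed unit disk centered at `p`
with pairwise distances strictly greater than 1. -/
theorem five_points_in_unit_disk (p : Plane) (S : Finset Plane)
    (h1 : ∀ x ∈ S, dist x p ≤ 1)
    (h2 : ∀ x ∈ S, ∀ y ∈ S, x ≠ y → 1 < dist x y) :
    S.card ≤ 5 := by
  set z : Plane → ℂ := fun x => Complex.orthonormalBasisOneI.repr.symm (x - p) with hz
  have hdist : ∀ x y, ‖z x - z y‖ = dist x y := by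
    intro x y
    rw [hz, ← map_sub, LinearIsometryEquiv.norm_map, sub_sub_sub_cancel_right, dist_eq_norm]
  have hnorm : ∀ x, ‖z x‖ = dist x p := fun x => by simpa [z] using hdist x p
  by_contra! hcard
  obtain ⟨x, hx, y, hy, hxy, hcos⟩ := exists_ne_half_le_cos_sub S (fun x => (z x).arg) hcard
  have hclose := Complex.norm_sub_le_one_of_half_le_cos_arg_sub
    ((hnorm x).trans_le (h1 x hx)) ((hnorm y).trans_le (h1 y hy)) hcos
  rw [hdist] at hclose
  exact (h2 x hx y hy hxy).not_ge hclose
end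
end

section
/- Given a feasible solution S (a set of stabs, each blob containing at least one stab) to the stab placement problem on the blobs of a cloud C, one can construct a feasible hub placement on the same blobs using at most 2|S| − 1 hubs. -/
noncomputable section

/-- The unit-distance graph on the sensors: blobs are its connected components. -/
def unitGraph (V : Finset Plane) : SimpleGraph V where
  Adj u v := u ≠ v ∧ dist (u : Plane) (v : Plane) ≤ 1
  symm := by
    constructor
    intro u v h
    exact ⟨h.1.symm, by rw [dist_comm]; exact h.2⟩
  loopless := by constructor; intro v h; exact h.1 rfl

/-- The distance-2 graph on the sensors: clouds are its connected components. -/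
def twoGraph (V : Finset Plane) : SimpleGraph V where
  Adj u v := u ≠ v ∧ dist (u : Plane) (v : Plane) ≤ 2
  symm := by
    constructor
    intro u v h
    exact ⟨h.1.symm, by rw [dist_comm]; exact h.2⟩
  loopless := by constructor; intro v h; exact h.1 rfl

/-- Position of a device (sensor or hub). -/
def devPos (V H : Finset Plane) : (V ⊕ H : Type) → Plane :=
  Sum.elim (fun v => (v : Plane)) (fun h => (h : Plane))

/-- Communication graph on sensors `V` and hubs `H`: edges between devices at distance
at most 1, except that there are no hub–hub edges. -/
def hubGraph (V H : Finset Plane) : SimpleGraph (V ⊕ H : Type) where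
  Adj a b := a ≠ b ∧ dist (devPos V H a) (devPos V H b) ≤ 1 ∧ ¬ (a.isRight ∧ b.isRight)
  symm := by
    constructor
    intro a b h
    refine ⟨h.1.symm, by rw [dist_comm]; exact h.2.1, ?_⟩
    intro hc
    exact h.2.2 ⟨hc.2, hc.1⟩
  loopless := by constructor; intro a h; exact h.1 rfl

/-!
Put a hub at every stab within range of a sensor. Every sensor reaches the hub of a stab of
its blob, so the sensors fall into at most `|S|` classes of sensors that reach each other.
While two classes remain, connectivity of the cloud yields sensors of different classes at
distance at most `2`, and a hub at their midpoint merges two classes. At most `|S| - 1`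
merges are needed.
-/

namespace Setoid

theorem card_quotient_lt_of_le {α : Type*} [Finite α] {s t : Setoid α} (hst : s ≤ t) {x y : α}
    (hs : ¬ s x y) (ht : t x y) : Nat.card (Quotient t) < Nat.card (Quotient s) := by
  classical
  have := Fintype.ofFinite α
  simp only [Nat.card_eq_fintype_card]
  refine Fintype.card_lt_of_surjective_not_injective (map_of_le hst)
    (Quotient.ind fun a => ⟨⟦a⟧, rfl⟩) fun hinj => hs ?_
  exact Quotient.exact (@hinj ⟦x⟧ ⟦y⟧ (Quotient.sound ht))

end Setoid

section HubGraph

variable {V H H' : Finset Plane}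

@[simp]
lemma hubGraph_adj_inl_inr {v : V} {h : H} :
    (hubGraph V H).Adj (.inl v) (.inr h) ↔ dist (v : Plane) h ≤ 1 := by
  simp [hubGraph, devPos]

def unitGraphHom (V H : Finset Plane) : unitGraph V →g hubGraph V H where
  toFun := Sum.inl
  map_rel' := fun ⟨hne, hd⟩ => ⟨by simpa using hne, by simpa [devPos] using hd, by simp⟩

def hubGraphHomOfSubset (V : Finset Plane) (hHH' : H ⊆ H') : hubGraph V H →g hubGraph V H' where
  toFun := Sum.map id fun h => ⟨h, hHH' h.2⟩
  map_rel' := by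
    rintro (v | h) (w | g) ⟨hne, hd, hr⟩
    · exact ⟨by simpa using hne, by simpa [devPos] using hd, by simp⟩
    · exact ⟨by simp, by simpa [devPos] using hd, by simp⟩
    · exact ⟨by simp, by simpa [devPos] using hd, by simp⟩
    · exact absurd ⟨rfl, rfl⟩ hr

lemma hubGraph_reachable_of_dist_le_one {a b : V} {m : Plane} (hm : m ∈ H)
    (ha : dist (a : Plane) m ≤ 1) (hb : dist (b : Plane) m ≤ 1) :
    (hubGraph V H).Reachable (.inl a) (.inl b) :=
  let hub : H := ⟨m, hm⟩
  (hubGraph_adj_inl_inr (h := hub).2 ha).reachable.trans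
    (hubGraph_adj_inl_inr (h := hub).2 hb).symm.reachable

def sensorSetoid (V H : Finset Plane) : Setoid V :=
  (hubGraph V H).reachableSetoid.comap Sum.inl

def sensorClassCount (V H : Finset Plane) : ℕ :=
  Nat.card (Quotient (sensorSetoid V H))

lemma sensorSetoid_mono (hHH' : H ⊆ H') : sensorSetoid V H ≤ sensorSetoid V H' :=
  fun _ _ hvw => hvw.map (hubGraphHomOfSubset V hHH')

lemma sensorSetoid_of_unitGraph_reachable {v w : V} (hvw : (unitGraph V).Reachable v w) :
    sensorSetoid V H v w :=
  hvw.map (unitGraphHom V H)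

lemma sensorClassCount_pos (hV : V.Nonempty) : 0 < sensorClassCount V H :=
  have ⟨v, hv⟩ := hV
  have : Nonempty (Quotient (sensorSetoid V H)) := ⟨Quotient.mk _ ⟨v, hv⟩⟩
  Nat.card_pos

lemma hubGraph_connected_of_sensorClassCount_le_one (hV : V.Nonempty)
    (hH : ∀ h ∈ H, ∃ v : V, dist (v : Plane) h ≤ 1) (hcount : sensorClassCount V H ≤ 1) :
    (hubGraph V H).Connected := by
  have : Subsingleton (Quotient (sensorSetoid V H)) :=
    Finite.card_le_one_iff_subsingleton.mp hcount
  have toSensor : ∀ a, ∃ v : V, (hubGraph V H).Reachable a (.inl v) := by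
    rintro (v | h)
    · exact ⟨v, .rfl⟩
    · obtain ⟨v, hv⟩ := hH h h.2
      exact ⟨v, (hubGraph_adj_inl_inr.2 hv).symm.reachable⟩
  obtain ⟨v₀, hv₀⟩ := hV
  refine (SimpleGraph.connected_iff _).2 ⟨fun a b => ?_, ⟨.inl ⟨v₀, hv₀⟩⟩⟩
  obtain ⟨v, hav⟩ := toSensor a
  obtain ⟨w, hbw⟩ := toSensor b
  have hvw : sensorSetoid V H v w := Quotient.exact (Subsingleton.elim (Quotient.mk _ v) _)
  exact hav.trans (hvw.trans hbw.symm)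

lemma sensorClassCount_le_card (hH : ∀ h ∈ H, ∃ v : V, dist (v : Plane) h ≤ 1)
    (hcover :
      ∀ v : V, ∃ h ∈ H, ∃ u : V, (unitGraph V).Reachable v u ∧ dist h (u : Plane) ≤ 1) :
    sensorClassCount V H ≤ H.card := by
  choose near hnear using fun h : H => hH h h.2
  let cls : H → Quotient (sensorSetoid V H) := fun h => Quotient.mk _ (near h)
  refine (Nat.card_le_card_of_surjective cls ?_).trans (Nat.card_eq_finsetCard H).le
  refine Quotient.ind fun v => ?_
  obtain ⟨h, hh, u, hvu, hhu⟩ := hcover v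
  have hu : sensorSetoid V H u (near ⟨h, hh⟩) :=
    hubGraph_reachable_of_dist_le_one hh (by rwa [dist_comm]) (hnear ⟨h, hh⟩)
  exact ⟨⟨h, hh⟩, Quotient.sound ((sensorSetoid_of_unitGraph_reachable hvu).trans hu).symm⟩

theorem exists_dist_le_two_not_sensorSetoid (hcloud : (twoGraph V).Connected)
    (hcount : 1 < sensorClassCount V H) :
    ∃ a b : V, dist (a : Plane) b ≤ 2 ∧ ¬ sensorSetoid V H a b := by
  obtain ⟨x, y, hxy⟩ := Finite.one_lt_card_iff_nontrivial.mp hcount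
  induction x using Quotient.ind
  induction y using Quotient.ind
  rename_i x y
  obtain ⟨d, -, hx, hy⟩ := (hcloud.preconnected x y).some.exists_boundary_dart
    {w | sensorSetoid V H x w} ((sensorSetoid V H).refl' x) fun h => hxy (Quotient.sound h)
  exact ⟨d.fst, d.snd, d.adj.2, fun h => hy ((sensorSetoid V H).trans' hx h)⟩

theorem exists_merging_hub (hcloud : (twoGraph V).Connected) (hcount : 1 < sensorClassCount V H) :
    ∃ m ∉ H, (∃ v : V, dist (v : Plane) m ≤ 1) ∧
      sensorClassCount V (insert m H) < sensorClassCount V H := by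
  obtain ⟨a, b, hab, hnot⟩ := exists_dist_le_two_not_sensorSetoid hcloud hcount
  have ha : dist (a : Plane) (midpoint ℝ (a : Plane) b) ≤ 1 := by
    rw [dist_left_midpoint (𝕜 := ℝ), Real.norm_two]
    linarith
  have hb : dist (b : Plane) (midpoint ℝ (a : Plane) b) ≤ 1 := by
    rw [dist_right_midpoint (𝕜 := ℝ), Real.norm_two]
    linarith
  refine ⟨midpoint ℝ (a : Plane) b, fun hm => hnot (hubGraph_reachable_of_dist_le_one hm ha hb),
    ⟨a, ha⟩, Setoid.card_quotient_lt_of_le (sensorSetoid_mono (H.subset_insert _)) hnot ?_⟩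
  exact hubGraph_reachable_of_dist_le_one (H.mem_insert_self _) ha hb

theorem exists_hubGraph_connected (hV : V.Nonempty) (hcloud : (twoGraph V).Connected)
    (hH : ∀ h ∈ H, ∃ v : V, dist (v : Plane) h ≤ 1) :
    ∃ M : Finset Plane,
      M.card + 1 ≤ H.card + sensorClassCount V H ∧ (hubGraph V M).Connected := by
  induction hk : sensorClassCount V H using Nat.strong_induction_on generalizing H with
  | _ k ih =>
  have hpos := sensorClassCount_pos (H := H) hV
  rcases le_or_gt k 1 with hk1 | hk1
  · exact ⟨H, by omega, hubGraph_connected_of_sensorClassCount_le_one hV hH (hk ▸ hk1)⟩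
  obtain ⟨m, hmH, hm, hlt⟩ := exists_merging_hub hcloud (hk ▸ hk1)
  have hH' : ∀ h ∈ insert m H, ∃ v : V, dist (v : Plane) h ≤ 1 := by
    simpa only [Finset.forall_mem_insert] using ⟨hm, hH⟩
  obtain ⟨M, hM, hconn⟩ := ih _ (hk ▸ hlt) hH' rfl
  rw [Finset.card_insert_of_notMem hmH] at hM
  exact ⟨M, by omega, hconn⟩

end HubGraph

/-- Given a feasible stab placement `S` on the blobs of a cloud `V` (every blob contains
a stab), there is a feasible hub placement on the same blobs with at most `2|S| - 1` hubs. -/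
theorem stab_to_hub (V S : Finset Plane) (hV : V.Nonempty)
    (hcloud : (twoGraph V).Connected)
    (hstab : ∀ v : V, ∃ s ∈ S, ∃ u : V, (unitGraph V).Reachable v u ∧ dist s (u : Plane) ≤ 1) :
    ∃ Hs : Finset Plane, Hs.card ≤ 2 * S.card - 1 ∧ (hubGraph V Hs).Connected := by
  classical
  set T := S.filter fun s => ∃ v : V, dist (v : Plane) s ≤ 1
  have hT : ∀ t ∈ T, ∃ v : V, dist (v : Plane) t ≤ 1 := fun _ ht =>
    (Finset.mem_filter.1 ht).2
  have hcover : ∀ v : V, ∃ t ∈ T, ∃ u : V,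
      (unitGraph V).Reachable v u ∧ dist t (u : Plane) ≤ 1 := by
    intro v
    obtain ⟨s, hs, u, hvu, hsu⟩ := hstab v
    exact ⟨s, Finset.mem_filter.2 ⟨hs, u, by rwa [dist_comm]⟩, u, hvu, hsu⟩
  obtain ⟨M, hM, hconn⟩ := exists_hubGraph_connected hV hcloud hT
  have hcount := sensorClassCount_le_card hT hcover
  have hTS : T.card ≤ S.card := Finset.card_le_card (Finset.filter_subset _ S)
  exact ⟨M, by omega, hconn⟩
end
end

section
/- Consider the greedy set cover process over a finite universe U: starting from T₁ = {B₀} for some fixed B₀ ∈ U, at step j a set S_j ⊆ U \ T_j of maximum cardinality among the available choices is selected (each available choice S(T_j, y) has size at most 4), and T_{j+1} = T_j ∪ S_j, until T covers U. Assign each B ∈ S_j weight w(B) = 1/|S_j| and w(B₀) = 1. Then for any set Z in the original cover family with |Z| ≤ 5, the total weight of the elements of Z is at most 1 + 1/4 + 1/3 + 1/2 + 1 = 37/12. -/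
noncomputable section


private def Hsum (n : ℕ) : ℝ := ∑ k ∈ Finset.range n, 1 / (k + 1 : ℝ)

private lemma Hsum_mono {m n : ℕ} (h : m ≤ n) : Hsum m ≤ Hsum n := by
  unfold Hsum
  apply Finset.sum_le_sum_of_subset_of_nonneg (Finset.range_subset_range.mpr h)
  intro k _ _; positivity

private lemma Hsum_step {m n : ℕ} (h : m ≤ n) :
    Hsum m + ((n - m : ℕ) : ℝ) * (1 / (n : ℝ)) ≤ Hsum n := by
  rcases Nat.eq_zero_or_pos n with rfl | hn
  · interval_cases m; simp
  have key : Hsum n = Hsum m + ∑ k ∈ Finset.Ico m n, 1 / (k + 1 : ℝ) := by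
    unfold Hsum
    simp only [Finset.range_eq_Ico]
    exact (Finset.sum_Ico_consecutive _ (Nat.zero_le m) h).symm
  rw [key]
  have : ((n - m : ℕ) : ℝ) * (1 / (n : ℝ)) ≤ ∑ k ∈ Finset.Ico m n, 1 / (k + 1 : ℝ) := by
    have hcard : (Finset.Ico m n).card = n - m := Nat.card_Ico m n
    calc ((n - m : ℕ) : ℝ) * (1 / (n : ℝ))
        = (Finset.Ico m n).card • (1 / (n : ℝ)) := by rw [hcard, nsmul_eq_mul]
      _ ≤ ∑ k ∈ Finset.Ico m n, 1 / (k + 1 : ℝ) := by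
          apply Finset.card_nsmul_le_sum
          intro k hk
          rw [Finset.mem_Ico] at hk
          apply one_div_le_one_div_of_le
          · positivity
          · exact_mod_cast hk.2
  linarith



/-- Greedy set-cover weight analysis for the stitching algorithm: with the greedy process
`T 0 = {B₀}`, `T (j+1) = T j ∪ S j` (where `S j` is disjoint from `T j`, nonempty while
running, and of size at most 4), weights `w B = 1/|S j|` for `B ∈ S j` and `w B₀ = 1`,
any set `Z` of the cover family with `|Z| ≤ 5` that is eventually covered, whose first
touched part is `{B₀}` or lies in a single `S (ℓ-1)`, and which remains an available
greedy choice (`|Z \ T j| ≤ |S j|` for `ℓ ≤ j < N`), has total weight at most `37/12`. -/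
theorem greedy_weight_bound (U : Type) [Fintype U] [DecidableEq U]
    (B₀ : U) (S T : ℕ → Finset U) (w : U → ℝ) (Z : Finset U) (ℓ N : ℕ)
    (hT0 : T 0 = {B₀})
    (hTsucc : ∀ j, T (j + 1) = T j ∪ S j)
    (hdisj : ∀ j, Disjoint (S j) (T j))
    (hne : ∀ j < N, (S j).Nonempty)
    (hsize : ∀ j < N, (S j).card ≤ 4)
    (hwB₀ : w B₀ = 1)
    (hw : ∀ j < N, ∀ B ∈ S j, w B = 1 / (S j).card)
    (hZcard : Z.card ≤ 5)
    (hℓ : (Z ∩ T ℓ).Nonempty)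
    (hfirst : ∀ j < ℓ, Z ∩ T j = ∅)
    (hU : Z ∩ T ℓ = {B₀} ∨ (1 ≤ ℓ ∧ Z ∩ T ℓ ⊆ S (ℓ - 1)))
    (havail : ∀ j, ℓ ≤ j → j < N → (Z \ T j).card ≤ (S j).card)
    (hcover : Z ⊆ T N) :
    ∑ B ∈ Z, w B ≤ 37 / 12 := by
  -- ℓ ≤ N
  have hℓN : ℓ ≤ N := by
    by_contra hlt
    push_neg at hlt
    have h1 := hfirst N hlt
    have h2 : Z ∩ T N = Z := Finset.inter_eq_left.mpr hcover
    rw [h2] at h1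
    have := hℓ
    rw [h1] at this
    exact absurd (Finset.inter_subset_left this.choose_spec) (by simp)
  -- key downward induction
  have key : ∀ d j, j + d = N → ℓ ≤ j →
      ∑ B ∈ Z \ T j, w B ≤ Hsum (Z \ T j).card := by
    intro d
    induction d with
    | zero =>
      intro j hj _
      have hjN : j = N := by omega
      have : Z \ T j = ∅ := by
        rw [Finset.sdiff_eq_empty_iff_subset, hjN]; exact hcover
      simp [this, Hsum]
    | succ d ih =>
      intro j hj hℓj
      have hjN : j < N := by omega
      have hSsub : S j ⊆ T (j + 1) := by rw [hTsucc j]; exact Finset.subset_union_right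
      have hsplit : Z \ T j = (Z ∩ S j) ∪ (Z \ T (j + 1)) := by
        ext x
        have hx : x ∈ S j → x ∉ T j := fun hs ht => Finset.disjoint_left.mp (hdisj j) hs ht
        simp only [Finset.mem_sdiff, Finset.mem_union, Finset.mem_inter, hTsucc j,
          Finset.mem_union]
        tauto
      have hd2 : Disjoint (Z ∩ S j) (Z \ T (j + 1)) := by
        apply Finset.disjoint_left.mpr
        intro x hx hx2
        exact (Finset.mem_sdiff.mp hx2).2 (hSsub (Finset.mem_inter.mp hx).2)
      have hcardsplit : (Z \ T j).card = (Z ∩ S j).card + (Z \ T (j + 1)).card := by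
        rw [hsplit, Finset.card_union_of_disjoint hd2]
      have hsum : ∑ B ∈ Z \ T j, w B
          = ∑ B ∈ Z ∩ S j, w B + ∑ B ∈ Z \ T (j + 1), w B := by
        rw [hsplit, Finset.sum_union hd2]
      have hwsum : ∑ B ∈ Z ∩ S j, w B = ((Z ∩ S j).card : ℝ) * (1 / (S j).card) := by
        rw [Finset.sum_congr rfl (fun B hB => hw j hjN B (Finset.mem_inter.mp hB).2),
          Finset.sum_const, nsmul_eq_mul]
      have hih := ih (j + 1) (by omega) (by omega)
      set c := (Z ∩ S j).card with hc
      set r := (Z \ T (j + 1)).card with hr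
      rw [hsum, hwsum, hcardsplit]
      rcases Nat.eq_zero_or_pos c with hc0 | hc0
      · rw [hc0]; simpa using hih
      · have hrle : c + r ≤ (S j).card := hcardsplit ▸ havail j hℓj hjN
        have hpos : 0 < c + r := by omega
        have h1 : (c : ℝ) * (1 / (S j).card) ≤ (c : ℝ) * (1 / ((c + r : ℕ) : ℝ)) := by
          apply mul_le_mul_of_nonneg_left _ (by positivity)
          apply one_div_le_one_div_of_le (by exact_mod_cast hpos) (by exact_mod_cast hrle)
        have h2 : Hsum r + (((c + r) - r : ℕ) : ℝ) * (1 / ((c + r : ℕ) : ℝ)) ≤ Hsum (c + r) :=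
          Hsum_step (by omega)
        have h3 : ((c + r) - r : ℕ) = c := by omega
        rw [h3] at h2
        linarith
  -- weight of the first-touched part
  have hpart1 : ∑ B ∈ Z ∩ T ℓ, w B ≤ 1 := by
    rcases hU with h | ⟨h1, hsub⟩
    · rw [h]; simp [hwB₀]
    · have hℓ1N : ℓ - 1 < N := by omega
      have : ∑ B ∈ Z ∩ T ℓ, w B = ((Z ∩ T ℓ).card : ℝ) * (1 / (S (ℓ - 1)).card) := by
        rw [Finset.sum_congr rfl (fun B hB => hw (ℓ - 1) hℓ1N B (hsub hB)),
          Finset.sum_const, nsmul_eq_mul]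
      rw [this]
      have hcle : (Z ∩ T ℓ).card ≤ (S (ℓ - 1)).card := Finset.card_le_card hsub
      have hSpos : 0 < (S (ℓ - 1)).card := Finset.card_pos.mpr (hne _ hℓ1N)
      rw [mul_one_div]
      rw [div_le_one (by exact_mod_cast hSpos)]
      exact_mod_cast hcle
  -- weight of the rest
  have hrcard : (Z \ T ℓ).card ≤ 4 := by
    have h1 : (Z ∩ T ℓ).card + (Z \ T ℓ).card = Z.card := Finset.card_inter_add_card_sdiff Z (T ℓ)
    have h2 : 1 ≤ (Z ∩ T ℓ).card := Finset.card_pos.mpr hℓ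
    omega
  have hpart2 : ∑ B ∈ Z \ T ℓ, w B ≤ Hsum 4 := by
    calc ∑ B ∈ Z \ T ℓ, w B ≤ Hsum (Z \ T ℓ).card := key (N - ℓ) ℓ (by omega) le_rfl
      _ ≤ Hsum 4 := Hsum_mono hrcard
  have hsplitZ : ∑ B ∈ Z, w B = ∑ B ∈ Z ∩ T ℓ, w B + ∑ B ∈ Z \ T ℓ, w B := by
    rw [← Finset.sum_union (Finset.disjoint_sdiff_inter Z (T ℓ)).symm]
    · congr 1
      ext x; simp only [Finset.mem_union, Finset.mem_inter, Finset.mem_sdiff]; tauto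
  have hH4 : Hsum 4 = 25 / 12 := by
    simp [Hsum, Finset.sum_range_succ]
    norm_num
  rw [hsplitZ]
  rw [hH4] at hpart2
  linarith
end
end

section
/- If a₁, …, a_n are positive integers with a₁ + … + a_n = s, then a₁/(a₁+…+a_n) + a₂/(a₂+…+a_n) + … + a_n/a_n ≤ 1/s + 1/(s−1) + … + 1/1 (the s-th harmonic number H_s). -/
/-!
Write `Tᵢ = aᵢ + … + aₙ`. The `aᵢ` reciprocals `1/(k+1)` with `Tᵢ₊₁ ≤ k < Tᵢ` are each at
least `1/Tᵢ`, so `aᵢ/Tᵢ ≤ H_{Tᵢ} - H_{Tᵢ₊₁}`, and these differences telescope to `H_{T₁} = H_s`.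
-/

open Finset

lemma harmonic_cast_real (n : ℕ) :
    (harmonic n : ℝ) = ∑ k ∈ range n, 1 / ((k : ℝ) + 1) := by
  simp [harmonic]

lemma div_le_harmonic_sub_harmonic {a T : ℕ} (h : a ≤ T) :
    (a : ℝ) / T ≤ harmonic T - harmonic (T - a) := by
  have hterm : ∀ k ∈ Ico (T - a) T, 1 / (T : ℝ) ≤ 1 / ((k : ℝ) + 1) := by
    intro k hk
    have hkT : (k : ℝ) + 1 ≤ T := by exact_mod_cast (mem_Ico.mp hk).2
    exact one_div_le_one_div_of_le (by positivity) hkT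
  calc (a : ℝ) / T = #(Ico (T - a) T) • (1 / (T : ℝ)) := by
        rw [Nat.card_Ico, Nat.sub_sub_self h, nsmul_eq_mul, mul_one_div]
    _ ≤ ∑ k ∈ Ico (T - a) T, 1 / ((k : ℝ) + 1) := card_nsmul_le_sum _ _ _ hterm
    _ = harmonic T - harmonic (T - a) := by
        rw [harmonic_cast_real, harmonic_cast_real, sum_Ico_eq_sub _ (Nat.sub_le T a)]

lemma sum_div_sum_Ici_le_harmonic {n : ℕ} (a : Fin n → ℕ) :
    ∑ i, (a i : ℝ) / ∑ j ∈ Ici i, (a j : ℝ) ≤ harmonic (∑ i, a i) := by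
  induction n with
  | zero => simp
  | succ n ih =>
    have hIci (i : Fin n) : ∑ j ∈ Ici i.succ, (a j : ℝ) = ∑ j ∈ Ici i, (a j.succ : ℝ) := by
      rw [← Fin.map_succEmb_Ici, sum_map]
      rfl
    have hhead : (a 0 : ℝ) / ∑ j ∈ Ici 0, (a j : ℝ) ≤
        harmonic (∑ i, a i) - harmonic (∑ i : Fin n, a i.succ) := by
      have hsum := Fin.sum_univ_succ a
      have hrest : ∑ i, a i - a 0 = ∑ i : Fin n, a i.succ := by omega
      rw [← bot_eq_zero, Ici_bot, ← Nat.cast_sum, bot_eq_zero, ← hrest]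
      exact div_le_harmonic_sub_harmonic (by omega)
    have htail := ih (fun i : Fin n => a i.succ)
    beta_reduce at htail
    rw [Fin.sum_univ_succ]
    simp only [hIci]
    linarith

theorem harmonic_greedy_bound_general (n : ℕ) (a : Fin n → ℕ)
    (s : ℕ) (hs : s = ∑ i, a i) :
    ∑ i, (a i : ℝ) / (∑ j ∈ Finset.univ.filter (fun j => i ≤ j), (a j : ℝ))
      ≤ ∑ k ∈ Finset.range s, 1 / ((k : ℝ) + 1) := by
  simp_rw [filter_le_eq_Ici, ← harmonic_cast_real, hs]
  exact sum_div_sum_Ici_le_harmonic a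

/-- Harmonic bound: if `a₁, …, aₙ` are positive integers summing to `s`, then
`Σᵢ aᵢ / (aᵢ + aᵢ₊₁ + … + aₙ) ≤ 1/1 + 1/2 + … + 1/s = H_s`. -/
theorem harmonic_greedy_bound (n : ℕ) (a : Fin n → ℕ) (ha : ∀ i, 0 < a i)
    (s : ℕ) (hs : s = ∑ i, a i) :
    ∑ i, (a i : ℝ) / (∑ j ∈ Finset.univ.filter (fun j => i ≤ j), (a j : ℝ))
      ≤ ∑ k ∈ Finset.range s, 1 / ((k : ℝ) + 1) :=
  harmonic_greedy_bound_general n a s hs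
end

section
/- In the sparse-case PTAS analysis: if S is a Steiner tree obtained for grid-rounded terminals with |S| ≤ O(ns) + (1 + 1/m)|R*|·r, where s = D/(nm) ≥ r and |R*| ≥ D/r, and the placed relay set satisfies |R| ≤ O(n + ns/r) + |S|/r, then |R| ≤ (1 + O(1/m))·|R*|. -/
noncomputable section

/-- Arithmetic of the sparse-instance PTAS analysis: with `s = D/(nm)`, `D ≥ mnr`,
`|R*| ≥ D/r`, `|S| ≤ c₁·ns + (1 + 1/m)·|R*|·r` and `|R| ≤ c₂·(n + ns/r) + |S|/r`, one
gets `|R| ≤ (1 + c/m)·|R*|` for a constant `c` depending only on `c₁, c₂`. -/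
theorem sparse_ptas_arith (c1 c2 : ℝ) (hc1 : 0 ≤ c1) (hc2 : 0 ≤ c2) :
    ∃ c : ℝ, 0 ≤ c ∧ ∀ n m r D s S R Rstar : ℝ,
      1 ≤ n → 1 ≤ m → 1 ≤ r → 0 < D →
      s = D / (n * m) → m * n * r ≤ D →
      D / r ≤ Rstar →
      S ≤ c1 * (n * s) + (1 + 1 / m) * Rstar * r →
      R ≤ c2 * (n + n * s / r) + S / r →
      R ≤ (1 + c / m) * Rstar := by
  refine ⟨1 + c1 + 2 * c2, by positivity, ?_⟩
  intro n m r D s S R Rstar hn hm hr hD hs hDr hRs hS hR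
  have hm0 : (0:ℝ) < m := by linarith
  have hr0 : (0:ℝ) < r := by linarith
  have hn0 : (0:ℝ) < n := by linarith
  have hns : n * s = D / m := by
    rw [hs]; field_simp
  have hsr : r ≤ s := by
    rw [hs, le_div_iff₀ (by positivity)]; nlinarith
  have h1 : n ≤ n * s / r := by
    rw [le_div_iff₀ hr0]; nlinarith
  have hDle : D ≤ Rstar * r := by
    rw [div_le_iff₀ hr0] at hRs; exact hRs
  have h2 : n * s / r ≤ Rstar / m := by
    rw [hns, div_div, div_le_div_iff₀ (by positivity) hm0]
    nlinarith
  have h3 : n * s ≤ Rstar / m * r := by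
    calc n * s = n * s / r * r := by field_simp
      _ ≤ Rstar / m * r := by nlinarith
  have hRpos : 0 < Rstar := lt_of_lt_of_le (by positivity) hRs
  have hSr : S / r ≤ c1 * (Rstar / m) + (1 + 1 / m) * Rstar := by
    rw [div_le_iff₀ hr0]
    calc S ≤ c1 * (n * s) + (1 + 1 / m) * Rstar * r := hS
      _ ≤ c1 * (Rstar / m * r) + (1 + 1 / m) * Rstar * r := by nlinarith
      _ = (c1 * (Rstar / m) + (1 + 1 / m) * Rstar) * r := by ring
  have hfinal : R ≤ c2 * (Rstar / m + Rstar / m) + (c1 * (Rstar / m) + (1 + 1 / m) * Rstar) := by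
    have hnle : n ≤ Rstar / m := le_trans h1 h2
    nlinarith
  calc R ≤ c2 * (Rstar / m + Rstar / m) + (c1 * (Rstar / m) + (1 + 1 / m) * Rstar) := hfinal
    _ = (1 + (1 + c1 + 2 * c2) / m) * Rstar := by field_simp; ring
end
end
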